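/- arXiv:math/0501071 — 4 statements merged into one kernel-verified Lean document; each statement's English description precedes it below -/
import Mathlib

section
/- If f : ℝ → ℝ is smooth with f'' having isolated zeros that are disjoint from the zeros of f', then 0 is a regular value of the functional φ₁ : C⁰([0,1]) → ℝ defined by φ₁(u) = ∫₀¹ f'(u(t)) dt; that is, for every u with φ₁(u) = 0 the derivative Dφ₁(u) : v ↦ ∫₀¹ f''(u(t))v(t) dt is a nonzero linear functional. -/
/-- If `f` is smooth, the zeros of `f''` are isolated and disjoint from the zeros of `f'`,
then `0` is a regular value of `φ₁(u) = ∫₀¹ f'(u(t)) dt` on `C⁰([0,1])`: whenever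
`φ₁(u) = 0`, the derivative `v ↦ ∫₀¹ f''(u(t)) v(t) dt` is a nonzero linear functional. -/
theorem stmt3 (f : ℝ → ℝ) (hf : ContDiff ℝ (⊤ : ℕ∞) f)
    (hiso : ∀ x : ℝ, iteratedDeriv 2 f x = 0 →
      ∃ ε > 0, ∀ y : ℝ, y ≠ x → |y - x| < ε → iteratedDeriv 2 f y ≠ 0)
    (hdisj : ∀ x : ℝ, iteratedDeriv 2 f x = 0 → deriv f x ≠ 0) :
    ∀ u : ℝ → ℝ, Continuous u → (∫ t in (0:ℝ)..1, deriv f (u t)) = 0 →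
      ∃ v : ℝ → ℝ, Continuous v ∧ (∫ t in (0:ℝ)..1, iteratedDeriv 2 f (u t) * v t) ≠ 0 := by
  intro u hu hint
  have hc2 : Continuous (iteratedDeriv 2 f) :=
    hf.continuous_iteratedDeriv 2 (WithTop.coe_le_coe.mpr le_top)
  set g : ℝ → ℝ := fun t => iteratedDeriv 2 f (u t) with hg
  have hgc : Continuous g := hc2.comp hu
  by_cases hz : ∀ t ∈ Set.Icc (0:ℝ) 1, g t = 0
  · -- f'' ∘ u vanishes on [0,1]; then f' ∘ u never vanishes on [0,1], constant sign,
    -- contradicting the integral being zero.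
    exfalso
    set h : ℝ → ℝ := fun t => deriv f (u t) with hh
    have hhc : Continuous h := (hf.continuous_deriv (by simp)).comp hu
    have hne : ∀ t ∈ Set.Icc (0:ℝ) 1, h t ≠ 0 := fun t ht => hdisj _ (hz t ht)
    have hint' : IntervalIntegrable h MeasureTheory.volume 0 1 :=
      hhc.intervalIntegrable 0 1
    -- constant sign on [0,1]
    have hsign : (∀ t ∈ Set.Icc (0:ℝ) 1, 0 < h t) ∨ (∀ t ∈ Set.Icc (0:ℝ) 1, h t < 0) := by
      by_contra hcon
      push_neg at hcon
      obtain ⟨⟨a, ha, ha'⟩, ⟨b, hb, hb'⟩⟩ := hcon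
      have ha2 : h a < 0 := lt_of_le_of_ne ha' (hne a ha)
      have hb2 : 0 < h b := lt_of_le_of_ne hb' (Ne.symm (hne b hb))
      have hcont : ContinuousOn h (Set.uIcc a b) := hhc.continuousOn
      have : (0:ℝ) ∈ Set.uIcc (h a) (h b) := by
        rw [Set.mem_uIcc]; left; exact ⟨ha2.le, hb2.le⟩
      obtain ⟨c, hc, hc0⟩ := intermediate_value_uIcc hcont this
      have hcmem : c ∈ Set.Icc (0:ℝ) 1 := by
        have : Set.uIcc a b ⊆ Set.Icc (0:ℝ) 1 := Set.uIcc_subset_Icc ha hb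
        exact this hc
      exact hne c hcmem hc0
    rcases hsign with hpos | hneg
    · have : 0 < ∫ t in (0:ℝ)..1, h t :=
        intervalIntegral.intervalIntegral_pos_of_pos_on hint'
          (fun t ht => hpos t ⟨ht.1.le, ht.2.le⟩) one_pos
      exact this.ne' hint
    · have : 0 < ∫ t in (0:ℝ)..1, -h t :=
        intervalIntegral.intervalIntegral_pos_of_pos_on hint'.neg
          (fun t ht => neg_pos.mpr (hneg t ⟨ht.1.le, ht.2.le⟩)) one_pos
      rw [intervalIntegral.integral_neg, hint, neg_zero] at this
      exact this.ne rfl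
  · -- there is t₀ ∈ [0,1] with g t₀ ≠ 0; take v = g
    push_neg at hz
    obtain ⟨t₀, ht₀, hgt₀⟩ := hz
    refine ⟨g, hgc, ?_⟩
    have hsq : ∀ t, g t * g t = (g t)^2 := fun t => (sq (g t)).symm
    have hnn : (0:ℝ → ℝ) ≤ fun t => g t * g t := fun t => mul_self_nonneg _
    have hii : IntervalIntegrable (fun t => g t * g t) MeasureTheory.volume 0 1 :=
      (hgc.mul hgc).intervalIntegrable 0 1
    -- find t₁ ∈ Ioo 0 1 with g t₁ ≠ 0
    have hopen : IsOpen {t | g t ≠ 0} := isOpen_ne.preimage hgc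
    have hclos : t₀ ∈ closure (Set.Ioo (0:ℝ) 1) := by
      rw [closure_Ioo one_ne_zero.symm]; exact ht₀
    obtain ⟨t₁, ht₁g, ht₁⟩ :=
      mem_closure_iff.mp hclos _ hopen hgt₀
    have hpos : 0 < ∫ t in (0:ℝ)..1, g t * g t := by
      rw [intervalIntegral.integral_pos_iff_support_of_nonneg_ae
        (Filter.Eventually.of_forall hnn) hii]
      refine ⟨one_pos, ?_⟩
      have hsub : IsOpen ({t | g t ≠ 0} ∩ Set.Ioo 0 1) :=
        hopen.inter isOpen_Ioo
      have hne' : ({t | g t ≠ 0} ∩ Set.Ioo 0 1).Nonempty := ⟨t₁, ht₁g, ht₁⟩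
      have hmeas : 0 < MeasureTheory.volume ({t | g t ≠ 0} ∩ Set.Ioo 0 1) :=
        hsub.measure_pos _ hne'
      refine lt_of_lt_of_le hmeas (MeasureTheory.measure_mono ?_)
      rintro x ⟨hx1, hx2⟩
      refine ⟨?_, hx2.1, hx2.2.le⟩
      simp only [Function.mem_support]
      exact mul_ne_zero hx1 hx1
    exact hpos.ne'
end

section
/- Let X be a Banach space, V ⊆ X a dense linear subspace, and M ⊆ X a C¹ submanifold of finite codimension. Then V ∩ M is dense in M. -/
open Metric Set
open scoped NNReal

set_option maxHeartbeats 1000000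
set_option synthInstance.maxHeartbeats 200000

/-- Let `X` be a Banach space, `V ⊆ X` a dense linear subspace and `M ⊆ X` a `C¹`
submanifold of finite codimension (locally the zero set of a `C¹` submersion into `ℝᵏ`).
Then `V ∩ M` is dense in `M`. -/
theorem stmt4 {X : Type*} [NormedAddCommGroup X] [NormedSpace ℝ X] [CompleteSpace X]
    (V : Submodule ℝ X) (hV : Dense (V : Set X)) (M : Set X)
    (hM : ∀ x ∈ M, ∃ (k : ℕ) (U : Set X) (φ : X → (Fin k → ℝ))
        (Dφ : X → X →L[ℝ] (Fin k → ℝ)),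
      U ∈ nhds x ∧ (∀ y ∈ U, HasFDerivAt φ (Dφ y) y) ∧ ContinuousOn Dφ U ∧
      Function.Surjective (Dφ x) ∧ M ∩ U = {y ∈ U | φ y = 0}) :
    M ⊆ closure ((V : Set X) ∩ M) := by
  intro x hxM
  obtain ⟨k, U, φ, Dφ, hU, hderiv, hcont, hsurj, hMU⟩ := hM x hxM
  have hxU : x ∈ U := mem_of_mem_nhds hU
  have hφx : φ x = 0 := by
    have hx : x ∈ M ∩ U := ⟨hxM, hxU⟩
    rw [hMU] at hx
    exact hx.2
  set A := Dφ x with hA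
  -- every point of ℝᵏ has a preimage under A lying in V
  have hAV : ∀ z : Fin k → ℝ, ∃ u, u ∈ V ∧ A u = z := by
    have hdr : DenseRange A := hsurj.denseRange
    have him : Dense (A '' (V : Set X)) := hdr.dense_image A.continuous hV
    have hmap : Dense ((Submodule.map (A : X →ₗ[ℝ] (Fin k → ℝ)) V : Submodule ℝ (Fin k → ℝ)) :
        Set (Fin k → ℝ)) := by
      rwa [Submodule.map_coe]
    have hcl : IsClosed ((Submodule.map (A : X →ₗ[ℝ] (Fin k → ℝ)) V : Submodule ℝ (Fin k → ℝ)) :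
        Set (Fin k → ℝ)) :=
      (Submodule.map (A : X →ₗ[ℝ] (Fin k → ℝ)) V).closed_of_finiteDimensional
    have htop : ((Submodule.map (A : X →ₗ[ℝ] (Fin k → ℝ)) V : Submodule ℝ (Fin k → ℝ)) :
        Set (Fin k → ℝ)) = Set.univ := by
      rw [← hcl.closure_eq, hmap.closure_eq]
    intro z
    have hz : z ∈ Submodule.map (A : X →ₗ[ℝ] (Fin k → ℝ)) V := by
      rw [← SetLike.mem_coe, htop]; trivial
    obtain ⟨u, huV, hAu⟩ := hz
    exact ⟨u, huV, hAu⟩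
  choose u huV hAu using fun i : Fin k => hAV (Pi.single i 1)
  set C : ℝ := ∑ i, ‖u i‖ with hCdef
  have hC0 : 0 ≤ C := Finset.sum_nonneg fun i _ => norm_nonneg _
  set ι : (Fin k → ℝ) → X := fun t => ∑ i, t i • u i with hι
  have hιV : ∀ t, ι t ∈ V := fun t =>
    Submodule.sum_mem V fun i _ => Submodule.smul_mem V _ (huV i)
  have hAι : ∀ t, A (ι t) = t := by
    intro t
    have h1 : A (ι t) = ∑ i, t i • A (u i) := by
      rw [hι]; simp only [map_sum, map_smul]
    rw [h1]
    funext j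
    simp only [Finset.sum_apply, Pi.smul_apply, smul_eq_mul, hAu]
    rw [Finset.sum_eq_single j]
    · simp
    · intro i _ hij; simp [Pi.single_apply, hij]
    · intro h; exact absurd (Finset.mem_univ j) h
  have hιsub : ∀ t t', ι t - ι t' = ι (t - t') := by
    intro t t'
    simp only [hι, ← Finset.sum_sub_distrib, Pi.sub_apply, sub_smul]
  have hιnorm : ∀ t, ‖ι t‖ ≤ C * ‖t‖ := by
    intro t
    calc ‖ι t‖ ≤ ∑ i, ‖t i • u i‖ := norm_sum_le _ _
      _ = ∑ i, |t i| * ‖u i‖ := by simp [norm_smul]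
      _ ≤ ∑ i, ‖t‖ * ‖u i‖ := by
          refine Finset.sum_le_sum fun i _ => ?_
          exact mul_le_mul_of_nonneg_right (norm_le_pi_norm t i) (norm_nonneg _)
      _ = C * ‖t‖ := by rw [← Finset.mul_sum, hCdef]; ring
  set c₀ : ℝ := 1 / (2 * (C + 1)) with hc₀def
  have hc₀pos : 0 < c₀ := by positivity
  have hc₀C : c₀ * C ≤ 1 / 2 := by
    rw [hc₀def, div_mul_eq_mul_div, one_mul, div_le_div_iff₀ (by positivity) (by norm_num)]
    nlinarith
  -- choose δ such that the ball is in U and the derivative is c₀-close to A there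
  have hev : ∀ᶠ z in nhds x, z ∈ U ∧ ‖Dφ z - A‖ < c₀ := by
    have h1 : ContinuousAt Dφ x := hcont.continuousAt hU
    have h2 : ∀ᶠ z in nhds x, ‖Dφ z - A‖ < c₀ := by
      have hset : {B : X →L[ℝ] (Fin k → ℝ) | ‖B - A‖ < c₀} = Metric.ball A c₀ := by
        ext B; simp [Metric.mem_ball, dist_eq_norm]
      have : {B : X →L[ℝ] (Fin k → ℝ) | ‖B - A‖ < c₀} ∈ nhds A := by
        rw [hset]; exact Metric.ball_mem_nhds _ hc₀pos
      exact h1.eventually_mem this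
    have hUe : ∀ᶠ z in nhds x, z ∈ U := hU
    exact hUe.and h2
  obtain ⟨δ, hδ0, hδ⟩ := Metric.eventually_nhds_iff.1 hev
  have hballU : ∀ z ∈ ball x δ, z ∈ U := fun z hz => (hδ (mem_ball.1 hz)).1
  have hbound : ∀ z ∈ ball x δ, ‖Dφ z - A‖ ≤ c₀ := fun z hz => (hδ (mem_ball.1 hz)).2.le
  -- mean value estimate on the ball
  have key : ∀ a ∈ ball x δ, ∀ b ∈ ball x δ, ‖φ a - φ b - A (a - b)‖ ≤ c₀ * ‖a - b‖ := by
    intro a ha b hb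
    exact (convex_ball x δ).norm_image_sub_le_of_norm_hasFDerivWithin_le'
      (fun z hz => (hderiv z (hballU z hz)).hasFDerivWithinAt) hbound hb ha
  rw [Metric.mem_closure_iff]
  intro ε hε0
  set m : ℝ := min δ ε with hmdef
  have hm0 : 0 < m := lt_min hδ0 hε0
  set r : ℝ := m / (2 * (C + 1)) with hrdef
  have hr0 : 0 < r := by positivity
  have hCr : C * r ≤ m / 2 := by
    have hq : r * (2 * (C + 1)) = m := div_mul_cancel₀ _ (by positivity)
    have hmr : m = r * (2 * (C + 1)) := hq.symm
    rw [hmr]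
    nlinarith [hr0.le]
  -- choose v ∈ V close to x with φ v small
  have hφcont : ContinuousAt φ x := (hderiv x hxU).continuousAt
  have hnhd : (ball x (m / 4) ∩ {z | ‖φ z‖ < r / 2}) ∈ nhds x := by
    refine Filter.inter_mem (Metric.ball_mem_nhds _ (by positivity)) ?_
    have hset : {w : Fin k → ℝ | ‖w‖ < r / 2} = Metric.ball 0 (r / 2) := by
      ext w; simp [Metric.mem_ball, dist_zero_right]
    have : {w : Fin k → ℝ | ‖w‖ < r / 2} ∈ nhds (φ x) := by
      rw [hφx, hset]
      exact Metric.ball_mem_nhds _ (by positivity)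
    exact hφcont.eventually_mem this
  obtain ⟨v, hvmem, hvV⟩ := mem_closure_iff_nhds.1 (hV x) _ hnhd
  have hvx : ‖v - x‖ < m / 4 := by
    have := hvmem.1
    rwa [mem_ball, dist_eq_norm] at this
  have hφv : ‖φ v‖ < r / 2 := hvmem.2
  -- the slice map
  set s : Set (Fin k → ℝ) := closedBall 0 r with hsdef
  have hsub : ∀ t ∈ s, v + ι t ∈ ball x δ := by
    intro t ht
    rw [mem_ball, dist_eq_norm]
    have ht' : ‖t‖ ≤ r := by rwa [hsdef, mem_closedBall, dist_zero_right] at ht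
    have h1 : ‖v + ι t - x‖ ≤ ‖v - x‖ + ‖ι t‖ := by
      have : v + ι t - x = (v - x) + ι t := by abel
      rw [this]; exact norm_add_le _ _
    have h2 : ‖ι t‖ ≤ C * r :=
      (hιnorm t).trans (mul_le_mul_of_nonneg_left ht' hC0)
    have hmδ : m ≤ δ := min_le_left _ _
    calc ‖v + ι t - x‖ ≤ ‖v - x‖ + ‖ι t‖ := h1
      _ < m / 4 + C * r := by exact add_lt_add_of_lt_of_le hvx h2
      _ ≤ m / 4 + m / 2 := by linarith
      _ < m := by linarith
      _ ≤ δ := hmδ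
  have happrox : ApproximatesLinearOn (fun t => φ (v + ι t))
      (ContinuousLinearMap.id ℝ (Fin k → ℝ)) s (1 / 2 : ℝ≥0) := by
    intro t ht t' ht'
    have h1 := key (v + ι t) (hsub t ht) (v + ι t') (hsub t' ht')
    have h2 : v + ι t - (v + ι t') = ι (t - t') := by
      rw [← hιsub]; abel
    rw [h2, hAι] at h1
    have h3 : ‖ι (t - t')‖ ≤ C * ‖t - t'‖ := hιnorm _
    have h4 : c₀ * ‖ι (t - t')‖ ≤ (1 / 2) * ‖t - t'‖ := by
      calc c₀ * ‖ι (t - t')‖ ≤ c₀ * (C * ‖t - t'‖) :=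
            mul_le_mul_of_nonneg_left h3 hc₀pos.le
        _ = (c₀ * C) * ‖t - t'‖ := by ring
        _ ≤ (1 / 2) * ‖t - t'‖ :=
            mul_le_mul_of_nonneg_right hc₀C (norm_nonneg _)
    have h5 : ‖φ (v + ι t) - φ (v + ι t') - (t - t')‖ ≤ c₀ * ‖ι (t - t')‖ := by
      have : v + ι t - (v + ι t') = ι (t - t') := h2
      calc ‖φ (v + ι t) - φ (v + ι t') - (t - t')‖
          = ‖φ (v + ι t) - φ (v + ι t') - A (v + ι t - (v + ι t'))‖ := by rw [h2, hAι]
        _ ≤ c₀ * ‖v + ι t - (v + ι t')‖ := key _ (hsub t ht) _ (hsub t' ht')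
        _ = c₀ * ‖ι (t - t')‖ := by rw [h2]
    simp only [ContinuousLinearMap.id_apply]
    calc ‖φ (v + ι t) - φ (v + ι t') - (t - t')‖ ≤ c₀ * ‖ι (t - t')‖ := h5
      _ ≤ (1 / 2) * ‖t - t'‖ := h4
      _ = ((1 / 2 : ℝ≥0) : ℝ) * ‖t - t'‖ := by norm_num
  -- nonlinear right inverse of the identity
  let Rinv : (ContinuousLinearMap.id ℝ (Fin k → ℝ)).NonlinearRightInverse :=
    ⟨fun y => y, 1, fun y => by simp, fun y => rfl⟩
  have hsurjOn := happrox.surjOn_closedBall_of_nonlinearRightInverse Rinv hr0.le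
    (subset_refl s)
  have hι0 : ι (0 : Fin k → ℝ) = 0 := by simp [hι]
  have hRnorm : ((Rinv.nnnorm : ℝ)⁻¹ - ((1 / 2 : ℝ≥0) : ℝ)) * r = r / 2 := by
    have : (Rinv.nnnorm : ℝ) = 1 := rfl
    rw [this]; push_cast; ring
  have h0mem : (0 : Fin k → ℝ) ∈
      closedBall ((fun t => φ (v + ι t)) 0) (((Rinv.nnnorm : ℝ)⁻¹ - ((1 / 2 : ℝ≥0) : ℝ)) * r) := by
    rw [hRnorm, mem_closedBall]
    simp only [hι0, add_zero]
    rw [dist_comm, dist_zero_right]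
    exact hφv.le
  obtain ⟨t, hts, hyt⟩ := hsurjOn h0mem
  -- rearrange: hyt : φ (v + ι t) = 0
  set y := v + ι t with hydef
  have hyV : y ∈ V := V.add_mem hvV (hιV t)
  have hyball : y ∈ ball x δ := hsub t hts
  have hyU : y ∈ U := hballU y hyball
  have hyM : y ∈ M := by
    have : y ∈ M ∩ U := by
      rw [hMU]
      exact ⟨hyU, hyt⟩
    exact this.1
  refine ⟨y, ⟨hyV, hyM⟩, ?_⟩
  rw [dist_comm, dist_eq_norm]
  have ht' : ‖t‖ ≤ r := by rwa [mem_closedBall, dist_zero_right] at hts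
  have h2 : ‖ι t‖ ≤ C * r := (hιnorm t).trans (mul_le_mul_of_nonneg_left ht' hC0)
  have hmε : m ≤ ε := min_le_right _ _
  calc ‖y - x‖ ≤ ‖v - x‖ + ‖ι t‖ := by
        have : y - x = (v - x) + ι t := by rw [hydef]; abel
        rw [this]; exact norm_add_le _ _
    _ < m / 4 + C * r := add_lt_add_of_lt_of_le hvx h2
    _ ≤ m / 4 + m / 2 := by linarith
    _ < m := by linarith
    _ ≤ ε := hmε
end

section
/- The unit sphere of an infinite-dimensional separable Hilbert space H is contractible. -/
/-!
Two maps into the unit sphere that are never antipodal are homotopic along normalized straight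
segments. A linear isometry `S` without eigenvalue `-1` is therefore homotopic, on the sphere, to
the identity, and if its range misses a unit vector `v`, also to the constant map at `v`.
In an infinite-dimensional Hilbert space a Hilbert basis can be indexed by `ℕ × ι`, and the shift
`b (n, i) ↦ b (n + 1, i)` is such an isometry, with `v = b (0, i)`.
-/

open Function Metric NormedSpace
open scoped unitInterval

section Sphere

variable {E : Type*} [NormedAddCommGroup E] [NormedSpace ℝ E]

theorem lineMap_ne_zero_of_ne_neg {a b : E} (ha : ‖a‖ = 1) (hb : ‖b‖ = 1) (hab : a ≠ -b)
    (t : I) : AffineMap.lineMap a b (t : ℝ) ≠ 0 := by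
  intro h
  rw [AffineMap.lineMap_apply_module, add_eq_zero_iff_eq_neg] at h
  have hnorm : 1 - (t : ℝ) = t := by
    simpa [norm_smul, ha, hb, abs_of_nonneg t.2.1, abs_of_nonneg (sub_nonneg.2 t.2.2)]
      using congrArg norm h
  have ht : (t : ℝ) = 2⁻¹ := by linarith
  apply hab
  rw [ht] at h
  have := congrArg ((2 : ℝ) • ·) h
  norm_num [smul_smul, ← neg_smul] at this
  rwa [neg_one_smul] at this

theorem ContinuousMap.homotopic_of_forall_ne_neg {X : Type*} [TopologicalSpace X]
    {f g : C(X, sphere (0 : E) 1)} (h : ∀ x, (f x : E) ≠ -(g x : E)) : f.Homotopic g := by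
  let val : C(sphere (0 : E) 1, E) := ⟨Subtype.val, continuous_subtype_val⟩
  let F := Homotopy.affine (val.comp f) (val.comp g)
  have hF (p : I × X) : F p ≠ 0 :=
    lineMap_ne_zero_of_ne_neg (norm_eq_of_mem_sphere (f p.2)) (norm_eq_of_mem_sphere (g p.2))
      (h p.2) p.1
  refine ⟨{ toFun p := ⟨normalize (F p), by simpa using hF p⟩
            continuous_toFun := ?_
            map_zero_left x := ?_
            map_one_left x := ?_ }⟩
  · exact ((F.continuous.norm.inv₀ fun p => norm_ne_zero_iff.2 (hF p)).smul
      F.continuous).subtype_mk _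
  · ext
    simp [F, val, normalize_eq_self_of_norm_eq_one (norm_eq_of_mem_sphere (f x))]
  · ext
    simp [F, val, normalize_eq_self_of_norm_eq_one (norm_eq_of_mem_sphere (g x))]

theorem contractibleSpace_sphere_of_linearIsometry (S : E →ₗᵢ[ℝ] E) {v : E} (hv : ‖v‖ = 1)
    (hS : ∀ x, S x = -x → x = 0) (hSv : ∀ x, S x ≠ v) :
    ContractibleSpace (sphere (0 : E) 1) := by
  let S₁ : C(sphere (0 : E) 1, sphere (0 : E) 1) :=
    ⟨fun x => ⟨S x, by simp [norm_eq_of_mem_sphere x]⟩, by fun_prop⟩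
  have hid : (ContinuousMap.id _).Homotopic S₁ :=
    ContinuousMap.homotopic_of_forall_ne_neg fun x hx =>
      ne_zero_of_mem_unit_sphere x (hS x (neg_eq_iff_eq_neg.2 hx).symm)
  have hconst : S₁.Homotopic (.const _ ⟨v, by simpa using hv⟩) :=
    ContinuousMap.homotopic_of_forall_ne_neg fun x hx =>
      hSv (-x) (by rw [map_neg]; exact neg_eq_iff_eq_neg.2 hx)
  exact (contractible_iff_id_nullhomotopic _).2 ⟨_, hid.trans hconst⟩

end Sphere

namespace HilbertBasis

variable {ι ι' 𝕜 E : Type*} [RCLike 𝕜] [NormedAddCommGroup E] [InnerProductSpace 𝕜 E]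

theorem infinite_of_not_finiteDimensional (b : HilbertBasis ι 𝕜 E)
    (h : ¬ FiniteDimensional 𝕜 E) : Infinite ι := by
  refine not_finite_iff_infinite.1 fun _ => h ?_
  have := Fintype.ofFinite ι
  exact Module.Finite.of_basis b.toOrthonormalBasis.toBasis

variable [CompleteSpace E]

noncomputable def reindex (b : HilbertBasis ι 𝕜 E) (e : ι ≃ ι') : HilbertBasis ι' 𝕜 E :=
  .mk (b.orthonormal.comp e.symm e.symm.injective) <| by
    rw [e.symm.surjective.range_comp]
    exact b.dense_span.ge

section MapIndex

variable (b : HilbertBasis ι 𝕜 E) {f : ι → ι} (hf : Injective f)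

noncomputable def mapIndex : E →ₗᵢ[𝕜] E :=
  (b.orthonormal.comp f hf).orthogonalFamily.linearIsometry.comp b.repr.toLinearIsometry

theorem mapIndex_apply_self (i : ι) : b.mapIndex hf (b i) = b (f i) := by
  classical
  simp [mapIndex, HilbertBasis.repr_self, OrthogonalFamily.linearIsometry_apply_single]

theorem repr_mapIndex_apply (x : E) (i : ι) : b.repr (b.mapIndex hf x) (f i) = b.repr x i := by
  rw [b.repr_apply_apply, ← b.mapIndex_apply_self hf, LinearIsometry.inner_map_map,
    b.repr_apply_apply]

theorem repr_mapIndex_apply_of_notMem_range (x : E) {j : ι} (hj : j ∉ Set.range f) :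
    b.repr (b.mapIndex hf x) j = 0 := by
  have hsum := ((b.orthonormal.comp f hf).orthogonalFamily.hasSum_linearIsometry
    (b.repr x)).mapL (innerSL 𝕜 (b j))
  have hterm (i : ι) : innerSL 𝕜 (b j) (LinearIsometry.toSpanSingleton 𝕜 E
      ((b.orthonormal.comp f hf).1 i) (b.repr x i)) = 0 := by
    simp [b.orthonormal.2 (fun h => hj ⟨i, h.symm⟩)]
  rw [b.repr_apply_apply]
  simp only [hterm] at hsum
  exact hsum.unique hasSum_zero

end MapIndex

section Shift

variable (b : HilbertBasis (ℕ × ι) 𝕜 E)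

noncomputable def shift : E →ₗᵢ[𝕜] E :=
  b.mapIndex (Nat.succ_injective.prodMap injective_id)

theorem repr_shift_apply_zero (x : E) (i : ι) : b.repr (b.shift x) (0, i) = 0 :=
  b.repr_mapIndex_apply_of_notMem_range _ x (by simp)

theorem repr_shift_apply_succ (x : E) (n : ℕ) (i : ι) :
    b.repr (b.shift x) (n + 1, i) = b.repr x (n, i) :=
  b.repr_mapIndex_apply _ x (n, i)

theorem shift_ne_apply_zero (x : E) (i : ι) : b.shift x ≠ b (0, i) := by
  classical
  intro h
  simpa [h, HilbertBasis.repr_self] using b.repr_shift_apply_zero x i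

theorem eq_zero_of_shift_eq_neg {x : E} (hx : b.shift x = -x) : x = 0 := by
  have hcoord (n : ℕ) (i : ι) : b.repr x (n, i) = 0 := by
    induction n with
    | zero => simpa [hx] using b.repr_shift_apply_zero x i
    | succ n ih => simpa [hx, ih] using b.repr_shift_apply_succ x n i
  exact b.repr.injective (lp.ext (funext fun p => by simpa using hcoord p.1 p.2))

end Shift

end HilbertBasis

theorem stmt5_general (H : Type*) [NormedAddCommGroup H] [InnerProductSpace ℝ H]
    [CompleteSpace H]
    (hinf : ¬ FiniteDimensional ℝ H) :
    ContractibleSpace (Metric.sphere (0 : H) 1) := by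
  obtain ⟨w, b, -⟩ := exists_hilbertBasis ℝ H
  have := b.infinite_of_not_finiteDimensional hinf
  obtain ⟨e⟩ : Nonempty (w ≃ ℕ × w) := Cardinal.eq.1 (by simp [Cardinal.mk_prod])
  obtain ⟨i⟩ : Nonempty w := inferInstance
  let b' := b.reindex e
  exact contractibleSpace_sphere_of_linearIsometry b'.shift (b'.orthonormal.1 (0, i))
    (fun _ => b'.eq_zero_of_shift_eq_neg) (b'.shift_ne_apply_zero · i)

/-- The unit sphere of an infinite-dimensional separable (real) Hilbert space is
contractible. -/
theorem stmt5 (H : Type*) [NormedAddCommGroup H] [InnerProductSpace ℝ H]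
    [CompleteSpace H] [TopologicalSpace.SeparableSpace H]
    (hinf : ¬ FiniteDimensional ℝ H) :
    ContractibleSpace (Metric.sphere (0 : H) 1) :=
  stmt5_general H hinf
end

section
/- Suppose f : ℝ → ℝ is smooth and strictly increasing with image the open interval (a,b). Then for every w ∈ L²([0,1]) with a < ∫₀¹ w(t)dt < b, the periodic problem u' + f(u) = w, u(0) = u(1), has at most one solution u ∈ H¹. -/
/-- If `f` is smooth, strictly increasing with image `(a,b)`, then for every `w` with
`a < ∫₀¹ w < b`, the periodic problem `u' + f(u) = w`, `u(0) = u(1)` has at most one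
solution. -/
theorem stmt6 (f : ℝ → ℝ) (hf : ContDiff ℝ (⊤ : ℕ∞) f) (hmono : StrictMono f)
    (a b : ℝ) (hrange : Set.range f = Set.Ioo a b)
    (w : ℝ → ℝ) (hw : a < ∫ t in (0:ℝ)..1, w t) (hw' : (∫ t in (0:ℝ)..1, w t) < b)
    (u₁ u₂ : ℝ → ℝ)
    (h₁ : ∀ t ∈ Set.Icc (0:ℝ) 1, HasDerivAt u₁ (w t - f (u₁ t)) t)
    (h₂ : ∀ t ∈ Set.Icc (0:ℝ) 1, HasDerivAt u₂ (w t - f (u₂ t)) t)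
    (p₁ : u₁ 0 = u₁ 1) (p₂ : u₂ 0 = u₂ 1) :
    ∀ t ∈ Set.Icc (0:ℝ) 1, u₁ t = u₂ t := by
  set d : ℝ → ℝ := fun t => u₁ t - u₂ t with hd
  have hdD : ∀ t ∈ Set.Icc (0:ℝ) 1, HasDerivAt d (f (u₂ t) - f (u₁ t)) t := by
    intro t ht
    have : HasDerivAt (fun x => u₁ x - u₂ x) (w t - f (u₁ t) - (w t - f (u₂ t))) t :=
      (h₁ t ht).sub (h₂ t ht)
    convert this using 1
    ring
  have hsq : ∀ t ∈ Set.Icc (0:ℝ) 1,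
      HasDerivAt (fun t => d t ^ 2) (2 * d t * (f (u₂ t) - f (u₁ t))) t := by
    intro t ht
    have : HasDerivAt (fun x => d x ^ 2) (((2:ℕ):ℝ) * d t ^ (2 - 1) * (f (u₂ t) - f (u₁ t))) t :=
      (hdD t ht).pow 2
    convert this using 1
    ring
  have hnonpos : ∀ t ∈ Set.Icc (0:ℝ) 1, 2 * d t * (f (u₂ t) - f (u₁ t)) ≤ 0 := by
    intro t ht
    rcases lt_trichotomy (u₁ t) (u₂ t) with h | h | h
    · have hm := hmono h
      have hdlt : d t < 0 := by simp only [hd]; linarith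
      nlinarith
    · simp [hd, h]
    · have hm := hmono h
      have hdlt : 0 < d t := by simp only [hd]; linarith
      nlinarith
  have hanti : AntitoneOn (fun t => d t ^ 2) (Set.Icc 0 1) := by
    apply antitoneOn_of_deriv_nonpos (convex_Icc 0 1)
    · exact fun t ht => (hsq t ht).continuousAt.continuousWithinAt
    · intro t ht
      rw [interior_Icc] at ht
      exact (hsq t (Set.mem_Icc_of_Ioo ht)).differentiableAt.differentiableWithinAt
    · intro t ht
      rw [interior_Icc] at ht
      rw [(hsq t (Set.mem_Icc_of_Ioo ht)).deriv]
      exact hnonpos t (Set.mem_Icc_of_Ioo ht)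
  have h0m : (0:ℝ) ∈ Set.Icc (0:ℝ) 1 := by norm_num
  have h1m : (1:ℝ) ∈ Set.Icc (0:ℝ) 1 := by norm_num
  have hper : d 0 = d 1 := by simp [hd, p₁, p₂]
  have hconst : ∀ t ∈ Set.Icc (0:ℝ) 1, d t ^ 2 = d 0 ^ 2 := by
    intro t ht
    have h1 := hanti h0m ht ht.1
    have h2 := hanti ht h1m ht.2
    simp only at h1 h2
    rw [← hper] at h2
    linarith
  have hd0 : d 0 = 0 := by
    by_contra hne
    -- d never vanishes, hence has constant sign, hence is constant
    have hnever : ∀ t ∈ Set.Icc (0:ℝ) 1, d t ≠ 0 := by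
      intro t ht h0
      have := hconst t ht
      rw [h0] at this
      exact hne (by nlinarith)
    have hsame : ∀ t ∈ Set.Icc (0:ℝ) 1, d t = d 0 := by
      intro t ht
      have hsq' := hconst t ht
      have hcases : d t = d 0 ∨ d t = -d 0 := by
        have : (d t - d 0) * (d t + d 0) = 0 := by nlinarith
        rcases mul_eq_zero.mp this with h | h
        · left; linarith
        · right; linarith
      rcases hcases with h | h
      · exact h
      · exfalso
        -- d changes sign between 0 and t; IVT gives a zero
        have hcont : ContinuousOn d (Set.uIcc 0 t) := by
          intro s hs
          have hs' : s ∈ Set.Icc (0:ℝ) 1 := by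
            rw [Set.uIcc_of_le ht.1] at hs
            exact ⟨hs.1, le_trans hs.2 ht.2⟩
          exact (hdD s hs').continuousAt.continuousWithinAt
        have h0mem : (0:ℝ) ∈ Set.uIcc (d 0) (d t) := by
          rw [h]
          rcases lt_or_gt_of_ne hne with hlt | hgt
          · rw [Set.uIcc_of_le (by linarith)]
            constructor <;> linarith
          · rw [Set.uIcc_of_ge (by linarith)]
            constructor <;> linarith
        obtain ⟨c, hc, hdc⟩ := intermediate_value_uIcc hcont h0mem
        have hc' : c ∈ Set.Icc (0:ℝ) 1 := by
          rw [Set.uIcc_of_le ht.1] at hc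
          exact ⟨hc.1, le_trans hc.2 ht.2⟩
        exact hnever c hc' hdc
    -- d is constant on a neighborhood of 1/2, so its derivative there vanishes
    have hhalf : (1/2 : ℝ) ∈ Set.Icc (0:ℝ) 1 := by norm_num
    have hnb : Set.Icc (0:ℝ) 1 ∈ nhds (1/2 : ℝ) := by
      apply Icc_mem_nhds <;> norm_num
    have hev : d =ᶠ[nhds (1/2 : ℝ)] fun _ => d 0 :=
      Filter.eventuallyEq_of_mem hnb hsame
    have hderiv0 : HasDerivAt d 0 (1/2 : ℝ) := by
      have : HasDerivAt (fun _ : ℝ => d 0) 0 (1/2 : ℝ) := hasDerivAt_const _ _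
      exact this.congr_of_eventuallyEq hev
    have := (hdD (1/2) hhalf).unique hderiv0
    have heq : f (u₂ (1/2)) = f (u₁ (1/2)) := by linarith
    have : u₂ (1/2) = u₁ (1/2) := hmono.injective heq
    have : d (1/2) = 0 := by
      show u₁ (1/2) - u₂ (1/2) = 0
      rw [this, sub_self]
    exact hnever (1/2) hhalf this
  intro t ht
  have := hconst t ht
  rw [hd0] at this
  have : d t = 0 := by nlinarith
  simpa [hd, sub_eq_zero] using this
end
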